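/- For two alternatives (m = 2), the Nash product rule for Leontief utilities coincides with the uniform phantom rule: for every profile with peaks p_1, …, p_n ∈ Δ^2, a distribution q = (1 − t, t) ∈ Δ^2 maximizes the Nash product of Leontief utilities if and only if t = med(p_{1,2}, …, p_{n,2}, 0, 1/n, 2/n, …, (n−1)/n, 1). -/

import Mathlib

/-!
For a peak `p` with `p 1 = a`, the utility `t ↦ leontief p ![1 - t, t]` is the tent
`min ((1 - t) / (1 - a), t / a)`. Write `a i = P i 1`. If `#{i | t < a i} ≤ n t ≤ #{i | t ≤ a i}`,
moving from `t` to `s` multiplies each agent's utility by at most `s / t` or `(1 - s) / (1 - t)`,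
according to the side of its tent on which `t` lies; splitting the agents at `t` suitably, these
`n` factors sum to at most `n`, so by AM-GM their product is at most `1`. The uniform-phantom
median satisfies this counting condition, since at least `n t` phantoms `k / n` lie below it and
at least `n (1 - t)` above it. The maximizer is unique: each utility is concave, and strictly so
between two points where it takes the same value, so at the midpoint of two distinct maximizers
the Nash product would exceed their geometric mean.
-/

open Finset

/-- Leontief utility of an agent with peak `p` at distribution `q`:
the minimum of `q j / p j` over alternatives `j` with `p j > 0`. -/
noncomputable def leontief {m : ℕ} (p q : Fin m → ℝ) : ℝ :=
  sInf {x : ℝ | ∃ j, 0 < p j ∧ x = q j / p j}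

/-- `q` maximizes the Nash product of Leontief utilities at profile `P`. -/
def NashMax {m n : ℕ} (P : Fin n → Fin m → ℝ) (q : Fin m → ℝ) : Prop :=
  q ∈ stdSimplex ℝ (Fin m) ∧
    ∀ q' ∈ stdSimplex ℝ (Fin m), ∏ i, leontief (P i) q' ≤ ∏ i, leontief (P i) q

/-- Median (middle element of the sorted list, for lists of odd length). -/
noncomputable def med (l : List ℝ) : ℝ :=
  (l.insertionSort (· ≤ ·)).getD (l.length / 2) 0

section Leontief

variable {m : ℕ} {p q q' : Fin m → ℝ}

lemma finite_leontief_set (p q : Fin m → ℝ) : {x : ℝ | ∃ j, 0 < p j ∧ x = q j / p j}.Finite :=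
  (Set.finite_range fun j => q j / p j).subset fun _ ⟨j, _, hx⟩ => ⟨j, hx.symm⟩

lemma leontief_le {j : Fin m} (hj : 0 < p j) : leontief p q ≤ q j / p j :=
  csInf_le (finite_leontief_set p q).bddBelow ⟨j, hj, rfl⟩

lemma le_leontief (hp : ∃ j, 0 < p j) {c : ℝ} (h : ∀ j, 0 < p j → c ≤ q j / p j) :
    c ≤ leontief p q := by
  obtain ⟨j, hj⟩ := hp
  exact le_csInf ⟨_, j, hj, rfl⟩ fun _ ⟨k, hk, hx⟩ => hx ▸ h k hk

lemma exists_leontief_eq (hp : ∃ j, 0 < p j) (q : Fin m → ℝ) :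
    ∃ j, 0 < p j ∧ leontief p q = q j / p j := by
  obtain ⟨j, hj⟩ := hp
  exact Set.Nonempty.csInf_mem (s := {x | ∃ j, 0 < p j ∧ x = q j / p j}) ⟨_, j, hj, rfl⟩
    (finite_leontief_set p q)

lemma leontief_eq_of_le {j : Fin m} (hj : 0 < p j) (h : ∀ k, 0 < p k → q j / p j ≤ q k / p k) :
    leontief p q = q j / p j :=
  (leontief_le hj).antisymm (le_leontief ⟨j, hj⟩ h)

lemma leontief_nonneg (hq : ∀ j, 0 ≤ q j) : 0 ≤ leontief p q :=
  Real.sInf_nonneg fun _ ⟨j, hj, hx⟩ => hx ▸ div_nonneg (hq j) hj.le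

lemma leontief_pos (hp : ∃ j, 0 < p j) (hq : ∀ j, 0 < q j) : 0 < leontief p q := by
  obtain ⟨j, hj, h⟩ := exists_leontief_eq hp q
  exact h ▸ div_pos (hq j) hj

lemma concaveOn_leontief (hp : ∃ j, 0 < p j) : ConcaveOn ℝ Set.univ (leontief p) := by
  refine ⟨convex_univ, fun q _ q' _ a b ha hb _ => le_leontief hp fun j hj => ?_⟩
  calc a • leontief p q + b • leontief p q' ≤ a * (q j / p j) + b * (q' j / p j) := by
        simp only [smul_eq_mul]; gcongr <;> exact leontief_le hj
    _ = (a • q + b • q') j / p j := by simp only [Pi.add_apply, Pi.smul_apply, smul_eq_mul]; ring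

lemma leontief_lt_of_leontief_eq (hp : ∃ j, 0 < p j) (hqq' : ∀ j, 0 < p j → q j ≠ q' j)
    (heq : leontief p q = leontief p q') {a b : ℝ} (ha : 0 < a) (hb : 0 < b) (hab : a + b = 1) :
    leontief p q < leontief p (a • q + b • q') := by
  obtain ⟨j, hj, h⟩ := exists_leontief_eq hp (a • q + b • q')
  rw [h, Pi.add_apply, Pi.smul_apply, Pi.smul_apply, smul_eq_mul, smul_eq_mul]
  rcases (hqq' j hj).lt_or_gt with hlt | hlt
  · calc leontief p q ≤ q j / p j := leontief_le hj
      _ < _ := by gcongr; linarith [mul_pos hb (sub_pos.2 hlt), congrArg (· * q j) hab]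
  · calc leontief p q = leontief p q' := heq
      _ ≤ q' j / p j := leontief_le hj
      _ < _ := by gcongr; linarith [mul_pos ha (sub_pos.2 hlt), congrArg (· * q' j) hab]

end Leontief

lemma prod_le_one_of_sum_le_card {ι : Type*} (s : Finset ι) {c : ι → ℝ} (hc : ∀ i ∈ s, 0 ≤ c i)
    (h : ∑ i ∈ s, c i ≤ #s) : ∏ i ∈ s, c i ≤ 1 := by
  by_cases hz : ∃ i ∈ s, c i = 0
  · rw [prod_eq_zero_iff.mpr hz]
    exact zero_le_one
  push Not at hz
  have hpos : ∀ i ∈ s, 0 < c i := fun i hi => (hc i hi).lt_of_ne (hz i hi).symm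
  rw [← Real.exp_log (prod_pos hpos), Real.log_prod fun i hi => (hpos i hi).ne',
    Real.exp_le_one_iff]
  calc ∑ i ∈ s, Real.log (c i) ≤ ∑ i ∈ s, (c i - 1) :=
        sum_le_sum fun i hi => Real.log_le_sub_one_of_pos (hpos i hi)
    _ ≤ 0 := by simpa [sum_sub_distrib] using h

lemma mul_div_add_mul_one_sub_div_le {k l s t : ℝ} (hk : 0 ≤ k) (hl : 0 ≤ l)
    (hs : s ∈ Set.Icc 0 1) (ht : t ∈ Set.Icc 0 1) (hkt : 0 < k → 0 < t) (hlt : 0 < l → t < 1)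
    (h : (k - (k + l) * t) * (s - t) ≤ 0) :
    k * (s / t) + l * ((1 - s) / (1 - t)) ≤ k + l := by
  obtain ⟨hs₀, hs₁⟩ := hs
  rcases ht.1.eq_or_lt with rfl | ht₀
  · obtain rfl : k = 0 := hk.antisymm' (not_lt.1 fun hk => (hkt hk).false)
    simp only [div_zero, mul_zero, sub_zero, div_one, zero_add]
    nlinarith
  rcases ht.2.eq_or_lt with rfl | ht₁
  · obtain rfl : l = 0 := hl.antisymm' (not_lt.1 fun hl => (hlt hl).false)
    simp only [div_one, sub_self, div_zero, mul_zero, add_zero]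
    nlinarith
  have hkey : k * (s / t) + l * ((1 - s) / (1 - t)) - (k + l)
      = (k - (k + l) * t) * (s - t) / (t * (1 - t)) := by
    field_simp [(by linarith : 1 - t ≠ 0)]
    ring
  have : (k - (k + l) * t) * (s - t) / (t * (1 - t)) ≤ 0 :=
    div_nonpos_of_nonpos_of_nonneg h (by nlinarith)
  linarith

lemma exists_pos_of_mem_stdSimplex {m : ℕ} {p : Fin m → ℝ} (hp : p ∈ stdSimplex ℝ (Fin m)) :
    ∃ j, 0 < p j := by
  by_contra! h
  have := hp.2 ▸ sum_nonpos fun j _ => h j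
  norm_num at this

lemma mem_stdSimplex_fin_two_iff {t : ℝ} :
    ![1 - t, t] ∈ stdSimplex ℝ (Fin 2) ↔ t ∈ Set.Icc 0 1 := by
  simp [stdSimplex, Fin.forall_fin_two, and_comm]

lemma eq_of_mem_stdSimplex_fin_two {q : Fin 2 → ℝ} (hq : q ∈ stdSimplex ℝ (Fin 2)) :
    q = ![1 - q 1, q 1] :=
  congrArg Subtype.val ((stdSimplexEquivIcc ℝ).symm_apply_apply ⟨q, hq⟩).symm

section TwoAlternatives

variable {p : Fin 2 → ℝ}

lemma leontief_fin_two_le_of_le (hp : p ∈ stdSimplex ℝ (Fin 2)) {t : ℝ} (ht : 0 < t)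
    (htp : t ≤ p 1) (s : ℝ) : leontief p ![1 - s, s] ≤ s / t * leontief p ![1 - t, t] := by
  have hp₁ : 0 < p 1 := ht.trans_le htp
  have hsum : p 0 + p 1 = 1 := by simpa [Fin.sum_univ_two] using hp.2
  rw [leontief_eq_of_le (q := ![1 - t, t]) (j := 1) hp₁]
  · calc leontief p ![1 - s, s] ≤ s / p 1 := leontief_le hp₁
      _ = s / t * (t / p 1) := by field_simp
  · simp only [Fin.forall_fin_two, Matrix.cons_val_zero, Matrix.cons_val_one]
    refine ⟨fun hp₀ => ?_, fun _ => le_rfl⟩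
    rw [div_le_div_iff₀ hp₁ hp₀]
    nlinarith

lemma leontief_fin_two_le_of_ge (hp : p ∈ stdSimplex ℝ (Fin 2)) {t : ℝ} (ht : t < 1)
    (htp : p 1 ≤ t) (s : ℝ) :
    leontief p ![1 - s, s] ≤ (1 - s) / (1 - t) * leontief p ![1 - t, t] := by
  have hsum : p 0 + p 1 = 1 := by simpa [Fin.sum_univ_two] using hp.2
  have hp₀ : 0 < p 0 := by linarith
  rw [leontief_eq_of_le (q := ![1 - t, t]) (j := 0) hp₀]
  · calc leontief p ![1 - s, s] ≤ (1 - s) / p 0 := leontief_le hp₀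
      _ = (1 - s) / (1 - t) * ((1 - t) / p 0) := by field_simp [(by linarith : 1 - t ≠ 0)]
  · simp only [Fin.forall_fin_two, Matrix.cons_val_zero, Matrix.cons_val_one]
    refine ⟨fun _ => le_rfl, fun hp₁ => ?_⟩
    rw [div_le_div_iff₀ hp₀ hp₁]
    nlinarith

lemma leontief_fin_two_mul_lt_sq (hp : p ∈ stdSimplex ℝ (Fin 2)) {t t' : ℝ} (htt' : t ≠ t')
    (h : 0 < leontief p ![1 - t, t]) (h' : 0 < leontief p ![1 - t', t']) :
    leontief p ![1 - t, t] * leontief p ![1 - t', t'] <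
      leontief p ![1 - (t + t') / 2, (t + t') / 2] ^ 2 := by
  have hmid : ![1 - (t + t') / 2, (t + t') / 2] =
      (1 / 2 : ℝ) • ![1 - t, t] + (1 / 2 : ℝ) • ![1 - t', t'] := by
    simp only [Matrix.smul_cons, Matrix.smul_empty, Matrix.cons_add_cons, Matrix.empty_add_empty,
      smul_eq_mul]
    congr 2 <;> ring
  have hp' := exists_pos_of_mem_stdSimplex hp
  rw [hmid]
  set x := leontief p ![1 - t, t]
  set y := leontief p ![1 - t', t']
  set z := leontief p ((1 / 2 : ℝ) • ![1 - t, t] + (1 / 2 : ℝ) • ![1 - t', t'])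
  have hconc : (1 / 2 : ℝ) • x + (1 / 2 : ℝ) • y ≤ z :=
    (concaveOn_leontief hp').2 (Set.mem_univ _) (Set.mem_univ _) (by norm_num) (by norm_num)
      (by norm_num)
  simp only [smul_eq_mul] at hconc
  rcases eq_or_ne x y with hxy | hxy
  · have : x < z := leontief_lt_of_leontief_eq hp' (fun j _ => by fin_cases j <;> simpa using htt')
      hxy (by norm_num) (by norm_num) (by norm_num)
    rw [← hxy]
    nlinarith
  · nlinarith [sq_pos_of_ne_zero (sub_ne_zero.2 hxy)]

end TwoAlternatives

noncomputable def nashProduct {m n : ℕ} (P : Fin n → Fin m → ℝ) (q : Fin m → ℝ) : ℝ :=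
  ∏ i, leontief (P i) q

section NashProduct

variable {n : ℕ} {P : Fin n → Fin 2 → ℝ}

lemma nashProduct_fin_two_nonneg {s : ℝ} (hs : s ∈ Set.Icc 0 1) :
    0 ≤ nashProduct P ![1 - s, s] :=
  prod_nonneg fun _ _ => leontief_nonneg (mem_stdSimplex_fin_two_iff.2 hs).1

lemma nashMax_fin_two_iff {t : ℝ} :
    NashMax P ![1 - t, t] ↔ t ∈ Set.Icc 0 1 ∧
      ∀ s ∈ Set.Icc 0 1, nashProduct P ![1 - s, s] ≤ nashProduct P ![1 - t, t] := by
  refine and_congr mem_stdSimplex_fin_two_iff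
    ⟨fun h s hs => h _ (mem_stdSimplex_fin_two_iff.2 hs), fun h q hq => ?_⟩
  rw [eq_of_mem_stdSimplex_fin_two hq]
  exact h _ (mem_stdSimplex_fin_two_iff.1 (eq_of_mem_stdSimplex_fin_two hq ▸ hq))

lemma nashProduct_le_of_partition (hP : ∀ i, P i ∈ stdSimplex ℝ (Fin 2)) {t s : ℝ}
    (ht : t ∈ Set.Icc 0 1) (hs : s ∈ Set.Icc 0 1) (S : Finset (Fin n))
    (hS : ∀ i ∈ S, t ≤ P i 1) (hSc : ∀ i ∉ S, P i 1 ≤ t)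
    (hS₀ : S.Nonempty → 0 < t) (hS₁ : Sᶜ.Nonempty → t < 1)
    (hcard : ((#S : ℝ) - n * t) * (s - t) ≤ 0) :
    nashProduct P ![1 - s, s] ≤ nashProduct P ![1 - t, t] := by
  set c : Fin n → ℝ := S.piecewise (fun _ => s / t) (fun _ => (1 - s) / (1 - t))
  have hagent : ∀ i ∈ univ, leontief (P i) ![1 - s, s] ≤ c i * leontief (P i) ![1 - t, t] ∧
      0 ≤ c i := fun i _ => by
    by_cases hi : i ∈ S
    · simp only [c, piecewise_eq_of_mem _ _ _ hi]
      exact ⟨leontief_fin_two_le_of_le (hP i) (hS₀ ⟨i, hi⟩) (hS i hi) s,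
        div_nonneg hs.1 ht.1⟩
    · simp only [c, piecewise_eq_of_notMem _ _ _ hi]
      exact ⟨leontief_fin_two_le_of_ge (hP i) (hS₁ ⟨i, mem_compl.2 hi⟩) (hSc i hi) s,
        div_nonneg (sub_nonneg.2 hs.2) (sub_nonneg.2 ht.2)⟩
  have hsum : ∑ i, c i ≤ #(univ : Finset (Fin n)) := by
    have hn : (#S : ℝ) + #Sᶜ = #(univ : Finset (Fin n)) := by
      exact_mod_cast card_add_card_compl S
    rw [sum_piecewise, univ_inter, ← compl_eq_univ_sdiff, sum_const, sum_const, nsmul_eq_mul,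
      nsmul_eq_mul, ← hn]
    refine mul_div_add_mul_one_sub_div_le (Nat.cast_nonneg _) (Nat.cast_nonneg _) hs ht
      (fun h => hS₀ (card_pos.1 (Nat.cast_pos.1 h)))
      (fun h => hS₁ (card_pos.1 (Nat.cast_pos.1 h))) ?_
    simpa [hn] using hcard
  calc nashProduct P ![1 - s, s] ≤ ∏ i, (c i * leontief (P i) ![1 - t, t]) :=
        prod_le_prod (fun i _ => leontief_nonneg (mem_stdSimplex_fin_two_iff.2 hs).1)
          fun i hi => (hagent i hi).1
    _ = (∏ i, c i) * nashProduct P ![1 - t, t] := prod_mul_distrib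
    _ ≤ nashProduct P ![1 - t, t] :=
        mul_le_of_le_one_left (nashProduct_fin_two_nonneg ht)
          (prod_le_one_of_sum_le_card univ (fun i hi => (hagent i hi).2) hsum)

lemma nashProduct_le_of_card_filter (hP : ∀ i, P i ∈ stdSimplex ℝ (Fin 2)) {t : ℝ}
    (ht : t ∈ Set.Icc 0 1) (hgt : (#{i | t < P i 1} : ℝ) ≤ n * t)
    (hge : n * t ≤ #{i | t ≤ P i 1}) {s : ℝ} (hs : s ∈ Set.Icc 0 1) :
    nashProduct P ![1 - s, s] ≤ nashProduct P ![1 - t, t] := by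
  rcases lt_trichotomy s t with hst | rfl | hst
  · refine nashProduct_le_of_partition hP ht hs {i | t ≤ P i 1} (fun i hi => (mem_filter.1 hi).2)
      (fun i hi => ?_) (fun _ => hs.1.trans_lt hst) (fun hne => ?_) (by nlinarith)
    · simp only [mem_filter, mem_univ, true_and, not_le] at hi
      exact hi.le
    · have : (#{i | t ≤ P i 1} : ℝ) + #({i | t ≤ P i 1} : Finset (Fin n))ᶜ = n := by
        exact_mod_cast (card_add_card_compl _).trans (Fintype.card_fin n)
      have : (1 : ℝ) ≤ #({i | t ≤ P i 1} : Finset (Fin n))ᶜ := by exact_mod_cast card_pos.2 hne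
      nlinarith
  · exact le_rfl
  · refine nashProduct_le_of_partition hP ht hs {i | t < P i 1}
      (fun i hi => (mem_filter.1 hi).2.le) (fun i hi => by simpa using hi) (fun hne => ?_)
      (fun _ => hst.trans_le hs.2) (by nlinarith)
    have : (1 : ℝ) ≤ #{i | t < P i 1} := by exact_mod_cast card_pos.2 hne
    nlinarith

lemma nashProduct_pos_half (hP : ∀ i, P i ∈ stdSimplex ℝ (Fin 2)) :
    0 < nashProduct P ![1 - 1 / 2, 1 / 2] :=
  prod_pos fun i _ => leontief_pos (exists_pos_of_mem_stdSimplex (hP i))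
    (Fin.forall_fin_two.2 ⟨by norm_num, by norm_num⟩)

lemma nashProduct_mul_lt_sq (hP : ∀ i, P i ∈ stdSimplex ℝ (Fin 2)) (hn : 0 < n) {t t' : ℝ}
    (ht : t ∈ Set.Icc 0 1) (ht' : t' ∈ Set.Icc 0 1) (htt' : t ≠ t')
    (h₀ : nashProduct P ![1 - t, t] ≠ 0) (h₀' : nashProduct P ![1 - t', t'] ≠ 0) :
    nashProduct P ![1 - t, t] * nashProduct P ![1 - t', t'] <
      nashProduct P ![1 - (t + t') / 2, (t + t') / 2] ^ 2 := by
  have hpos {s : ℝ} (hs : s ∈ Set.Icc 0 1) (h : nashProduct P ![1 - s, s] ≠ 0) (i : Fin n) :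
      0 < leontief (P i) ![1 - s, s] :=
    (leontief_nonneg (mem_stdSimplex_fin_two_iff.2 hs).1).lt_of_ne
      (prod_ne_zero_iff.1 h i (mem_univ i)).symm
  rw [nashProduct, nashProduct, nashProduct, ← prod_mul_distrib, ← prod_pow]
  exact prod_lt_prod_of_nonempty (fun i _ => mul_pos (hpos ht h₀ i) (hpos ht' h₀' i))
    (fun i _ => leontief_fin_two_mul_lt_sq (hP i) htt' (hpos ht h₀ i) (hpos ht' h₀' i))
    (univ_nonempty_iff.2 ⟨⟨0, hn⟩⟩)

end NashProduct

lemma List.countP_ofFn {α : Type*} {n : ℕ} (f : Fin n → α) (p : α → Prop) [DecidablePred p] :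
    (List.ofFn f).countP (fun x => decide (p x)) = #{i | p (f i)} := by
  rw [← Multiset.coe_countP, ← Fin.univ_val_map, Multiset.countP_map]
  rfl

lemma List.countP_eq_card_filter_getElem {α : Type*} (l : List α) (p : α → Prop)
    [DecidablePred p] : l.countP (fun x => decide (p x)) = #{j : Fin l.length | p l[j]} := by
  conv_lhs => rw [← List.ofFn_getElem (xs := l)]
  exact List.countP_ofFn _ p

lemma List.SortedLE.countP_lt_getElem_le {α : Type*} [LinearOrder α] {l : List α}
    (hl : l.SortedLE) (i : ℕ) (hi : i < l.length) : l.countP (· < l[i]) ≤ i := by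
  rw [List.countP_eq_card_filter_getElem l (· < l[i])]
  calc #{j : Fin l.length | l[j] < l[i]} ≤ #{j : Fin l.length | j < i} :=
        card_le_card fun j hj => by
          simp only [Finset.mem_filter, Finset.mem_univ, true_and] at hj ⊢
          exact not_le.1 fun hij => (hl.getElem_le_getElem_of_le hij).not_gt hj
    _ = i := by rw [Fin.card_filter_val_lt]; omega

lemma List.SortedLE.countP_getElem_lt_le {α : Type*} [LinearOrder α] {l : List α}
    (hl : l.SortedLE) (i : ℕ) (hi : i < l.length) : l.countP (l[i] < ·) ≤ l.length - 1 - i := by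
  rw [List.countP_eq_card_filter_getElem l (l[i] < ·)]
  calc #{j : Fin l.length | l[i] < l[j]} ≤ #(Ioi (⟨i, hi⟩ : Fin l.length)) :=
        card_le_card fun j hj => by
          simp only [Finset.mem_filter, Finset.mem_univ, true_and] at hj
          exact mem_Ioi.2 <| Fin.lt_def.2 <| not_le.1 fun hji =>
            (hl.getElem_le_getElem_of_le hji).not_gt hj
    _ = l.length - 1 - i := Fin.card_Ioi _

section Median

variable {l : List ℝ} {n : ℕ}

lemma med_eq_getElem (hl : l.length = 2 * n + 1) :
    med l = (l.insertionSort (· ≤ ·))[n]'(by simp [hl]; omega) := by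
  simp only [med, hl, show (2 * n + 1) / 2 = n by omega]
  exact List.getD_eq_getElem _ _ _

lemma med_mem (hl : l.length = 2 * n + 1) : med l ∈ l :=
  (List.perm_insertionSort _ l).subset (med_eq_getElem hl ▸ List.getElem_mem _)

lemma countP_lt_med_le (hl : l.length = 2 * n + 1) : l.countP (· < med l) ≤ n := by
  rw [← (List.perm_insertionSort (· ≤ ·) l).countP_eq, med_eq_getElem hl]
  exact (List.sortedLE_insertionSort (l := l)).countP_lt_getElem_le n _

lemma countP_med_lt_le (hl : l.length = 2 * n + 1) : l.countP (med l < ·) ≤ n := by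
  rw [← (List.perm_insertionSort (· ≤ ·) l).countP_eq, med_eq_getElem hl]
  refine ((List.sortedLE_insertionSort (l := l)).countP_getElem_lt_le n _).trans_eq ?_
  simp only [List.length_insertionSort, hl]
  omega

end Median

noncomputable def uniformPhantoms (n : ℕ) : List ℝ :=
  List.ofFn fun k : Fin (n + 1) => (k : ℝ) / n

section UniformPhantoms

variable {n : ℕ} {t : ℝ}

lemma mul_le_countP_uniformPhantoms_lt (hn : 0 < n) (ht : t ≤ 1) :
    n * t ≤ (uniformPhantoms n).countP (· < t) := by
  have hn' : (0 : ℝ) < n := Nat.cast_pos.2 hn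
  have hc : ⌈n * t⌉₊ < n + 1 := Nat.lt_succ_of_le (Nat.ceil_le.2 (by nlinarith))
  rw [uniformPhantoms, List.countP_ofFn _ (· < t)]
  calc (n : ℝ) * t ≤ ⌈n * t⌉₊ := Nat.le_ceil _
    _ = #(Iio (⟨⌈n * t⌉₊, hc⟩ : Fin (n + 1))) := by rw [Fin.card_Iio]
    _ ≤ #{k : Fin (n + 1) | (k : ℝ) / n < t} := by
        refine Nat.cast_le.2 (card_le_card fun k hk => ?_)
        rw [mem_filter, div_lt_iff₀' hn']
        exact ⟨mem_univ k, Nat.lt_ceil.1 (Fin.lt_def.1 (mem_Iio.1 hk))⟩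

lemma sub_mul_le_countP_lt_uniformPhantoms (hn : 0 < n) (ht : t ∈ Set.Icc 0 1) :
    n - n * t ≤ (uniformPhantoms n).countP (t < ·) := by
  have hn' : (0 : ℝ) < n := Nat.cast_pos.2 hn
  have hnt : 0 ≤ n * t := mul_nonneg hn'.le ht.1
  have hf : ⌊n * t⌋₊ ≤ n := Nat.floor_le_of_le (by nlinarith [ht.2])
  rw [uniformPhantoms, List.countP_ofFn _ (t < ·)]
  calc (n : ℝ) - n * t ≤ ((n - ⌊n * t⌋₊ : ℕ) : ℝ) := by
        rw [Nat.cast_sub hf]; linarith [Nat.floor_le hnt]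
    _ = #(Ioi (⟨⌊n * t⌋₊, Nat.lt_succ_of_le hf⟩ : Fin (n + 1))) := by
        rw [Fin.card_Ioi, add_tsub_cancel_right]
    _ ≤ #{k : Fin (n + 1) | t < (k : ℝ) / n} := by
        refine Nat.cast_le.2 (card_le_card fun k hk => ?_)
        rw [mem_filter, lt_div_iff₀' hn']
        exact ⟨mem_univ k, (Nat.floor_lt hnt).1 (Fin.lt_def.1 (mem_Ioi.1 hk))⟩

variable {a : Fin n → ℝ}

lemma length_ofFn_append_uniformPhantoms :
    (List.ofFn a ++ uniformPhantoms n).length = 2 * n + 1 := by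
  rw [List.length_append, List.length_ofFn, uniformPhantoms, List.length_ofFn]
  ring

lemma med_uniformPhantoms_mem_Icc (ha : ∀ i, a i ∈ Set.Icc 0 1) :
    med (List.ofFn a ++ uniformPhantoms n) ∈ Set.Icc 0 1 := by
  rcases List.mem_append.1 (med_mem length_ofFn_append_uniformPhantoms) with h | h
  · obtain ⟨i, hi⟩ := (List.mem_ofFn' _ _).1 h
    exact hi ▸ ha i
  · obtain ⟨k, hk⟩ := (List.mem_ofFn' _ _).1 h
    rw [← hk]
    exact ⟨by positivity, div_le_one_of_le₀ (by exact_mod_cast k.is_le) n.cast_nonneg⟩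

lemma card_lt_med_uniformPhantoms_le (hn : 0 < n) (ha : ∀ i, a i ∈ Set.Icc 0 1) :
    (#{i | med (List.ofFn a ++ uniformPhantoms n) < a i} : ℝ) ≤
      n * med (List.ofFn a ++ uniformPhantoms n) := by
  set t := med (List.ofFn a ++ uniformPhantoms n)
  have hcount := countP_med_lt_le (length_ofFn_append_uniformPhantoms (a := a))
  rw [List.countP_append, List.countP_ofFn a (t < ·)] at hcount
  have hphantom := sub_mul_le_countP_lt_uniformPhantoms hn (med_uniformPhantoms_mem_Icc ha)
  have : (#{i | t < a i} : ℝ) + (uniformPhantoms n).countP (t < ·) ≤ n := by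
    exact_mod_cast hcount
  linarith

lemma mul_med_uniformPhantoms_le_card (hn : 0 < n) (ha : ∀ i, a i ∈ Set.Icc 0 1) :
    n * med (List.ofFn a ++ uniformPhantoms n) ≤
      #{i | med (List.ofFn a ++ uniformPhantoms n) ≤ a i} := by
  set t := med (List.ofFn a ++ uniformPhantoms n)
  have hcount := countP_lt_med_le (length_ofFn_append_uniformPhantoms (a := a))
  rw [List.countP_append, List.countP_ofFn a (· < t)] at hcount
  have hphantom := mul_le_countP_uniformPhantoms_lt hn (med_uniformPhantoms_mem_Icc ha).2
  have hsplit : #{i | a i < t} + #{i | t ≤ a i} = n := by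
    simpa [not_lt] using card_filter_add_card_filter_not (s := univ) (fun i => a i < t)
  have : (#{i | a i < t} : ℝ) + (uniformPhantoms n).countP (· < t) ≤ n := by
    exact_mod_cast hcount
  have : (#{i | a i < t} : ℝ) + #{i | t ≤ a i} = n := by exact_mod_cast hsplit
  linarith

end UniformPhantoms

/-- for two alternatives, the Nash product rule with Leontief utilities
coincides with the uniform phantom rule: `(1 - t, t)` maximizes the Nash product iff
`t` is the median of the peaks' second coordinates and the uniform phantoms
`0, 1/n, …, 1`. -/
theorem nash_eq_uniform_phantom {n : ℕ} (hn : 0 < n)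
    (P : Fin n → Fin 2 → ℝ) (hP : ∀ i, P i ∈ stdSimplex ℝ (Fin 2)) (t : ℝ) :
    NashMax P ![1 - t, t] ↔
      t = med (List.ofFn (fun i => P i 1) ++
        List.ofFn (fun k : Fin (n + 1) => (k : ℝ) / (n : ℝ))) := by
  have ha (i : Fin n) : P i 1 ∈ Set.Icc 0 1 := (stdSimplexEquivIcc ℝ ⟨P i, hP i⟩).2
  set t₀ := med (List.ofFn (fun i => P i 1) ++ uniformPhantoms n)
  have ht₀ : t₀ ∈ Set.Icc 0 1 := med_uniformPhantoms_mem_Icc ha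
  have hmax₀ (s : ℝ) (hs : s ∈ Set.Icc 0 1) :
      nashProduct P ![1 - s, s] ≤ nashProduct P ![1 - t₀, t₀] :=
    nashProduct_le_of_card_filter hP ht₀ (card_lt_med_uniformPhantoms_le hn ha)
      (mul_med_uniformPhantoms_le_card hn ha) hs
  rw [nashMax_fin_two_iff]
  refine ⟨fun ⟨ht, hmax⟩ => ?_, fun h => h ▸ ⟨ht₀, hmax₀⟩⟩
  have hpos : 0 < nashProduct P ![1 - t₀, t₀] :=
    (nashProduct_pos_half hP).trans_le (hmax₀ _ ⟨by norm_num, by norm_num⟩)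
  have heq : nashProduct P ![1 - t, t] = nashProduct P ![1 - t₀, t₀] :=
    (hmax₀ t ht).antisymm (hmax t₀ ht₀)
  by_contra hne
  have hlt := nashProduct_mul_lt_sq hP hn ht ht₀ hne (heq ▸ hpos.ne') hpos.ne'
  have hmid : (t + t₀) / 2 ∈ Set.Icc 0 1 := ⟨by linarith [ht.1, ht₀.1], by linarith [ht.2, ht₀.2]⟩
  have := pow_le_pow_left₀ (nashProduct_fin_two_nonneg hmid) (hmax₀ _ hmid) 2
  nlinarith
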